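/- Dummy target lemma, case where the objective target is not the dummy: suppose reals p_0, p_1, ..., p_n, x with x > 0, ∑_{i=0}^n p_i = 1, all p_i ≥ 0, and constraints p_i·(−x − Δ_i) + p_n·(x + Δ_n) + δ_i ≤ 0 for 1 ≤ i ≤ n−1 with Δ_i ≥ 0, plus p_n·(x + Δ_n) + δ_0 ≤ 0 (the dummy constraint). If p_0 > 0 and at least one constraint i ∈ {1,...,n−1} is strict (non-tight), then there exists a feasible point with a strictly smaller x and the same p_n (hence strictly larger objective p_n·Δ_{D,n} − a·x with a > 0): redistributing ε from p_0 to the other p_i keeps all constraints satisfiable with some x' < x. -/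
import Mathlib


theorem dummy_target (n : ℕ) (hn : 2 ≤ n)
    (p : ℕ → ℝ) (x : ℝ) (Δ : ℕ → ℝ) (Δn ΔDn a : ℝ) (δ : ℕ → ℝ)
    (hx : 0 < x) (ha : 0 < a)
    (hsum : ∑ i ∈ Finset.range (n + 1), p i = 1)
    (hpos : ∀ i ≤ n, 0 ≤ p i)
    (hΔ : ∀ i ∈ Finset.Icc 1 (n - 1), 0 ≤ Δ i) (hΔn : 0 ≤ Δn)
    (hcons : ∀ i ∈ Finset.Icc 1 (n - 1),
      p i * (-x - Δ i) + p n * (x + Δn) + δ i ≤ 0)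
    (hdummy : p n * (x + Δn) + δ 0 ≤ 0)
    (hp0 : 0 < p 0)
    (hstrict : ∃ i ∈ Finset.Icc 1 (n - 1),
      p i * (-x - Δ i) + p n * (x + Δn) + δ i < 0) :
    ∃ (x' : ℝ) (p' : ℕ → ℝ),
      0 < x' ∧ x' < x ∧ p' n = p n ∧
      (∑ i ∈ Finset.range (n + 1), p' i = 1) ∧
      (∀ i ≤ n, 0 ≤ p' i) ∧
      (∀ i ∈ Finset.Icc 1 (n - 1),
        p' i * (-x' - Δ i) + p' n * (x' + Δn) + δ i ≤ 0) ∧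
      (p' n * (x' + Δn) + δ 0 ≤ 0) ∧
      p' n * ΔDn - a * x' > p n * ΔDn - a * x := by
  have hn1 : (1:ℝ) ≤ (n:ℝ) - 1 := by
    have : (2:ℝ) ≤ (n:ℝ) := by exact_mod_cast hn
    linarith
  set c : ℝ := p 0 / ((n:ℝ) - 1) with hc
  have hcpos : 0 < c := div_pos hp0 (by linarith)
  set η : ℝ := min (c * x) x / 2 with hηdef
  have hηpos : 0 < η := by
    have := lt_min (mul_pos hcpos hx) hx
    rw [hηdef]; linarith
  have hηx : η < x := by
    have : min (c * x) x ≤ x := min_le_right _ _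
    rw [hηdef]; linarith
  have hηcx : η ≤ c * x := by
    have h1 : min (c * x) x ≤ c * x := min_le_left _ _
    have h2 : 0 < c * x := mul_pos hcpos hx
    rw [hηdef]; linarith
  set p' : ℕ → ℝ := fun i => if i = 0 then 0 else if i ≤ n - 1 then p i + c else p i with hp'
  have hp'n : p' n = p n := by
    rw [hp']
    simp only
    rw [if_neg (by omega), if_neg (by omega)]
  have hp'i : ∀ i ∈ Finset.Icc 1 (n - 1), p' i = p i + c := by
    intro i hi
    rw [Finset.mem_Icc] at hi
    rw [hp']
    simp only
    rw [if_neg (by omega), if_pos (by omega)]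
  -- decomposition of range (n+1)
  have hsplit : Finset.range (n + 1) = insert 0 (insert n (Finset.Icc 1 (n - 1))) := by
    ext i
    simp only [Finset.mem_range, Finset.mem_insert, Finset.mem_Icc]
    omega
  have h0notin : (0:ℕ) ∉ insert n (Finset.Icc 1 (n - 1)) := by
    simp only [Finset.mem_insert, Finset.mem_Icc]; omega
  have hnnotin : n ∉ Finset.Icc 1 (n - 1) := by
    simp only [Finset.mem_Icc]; omega
  have hcard : (Finset.Icc 1 (n - 1)).card = n - 1 := by
    rw [Nat.card_Icc]; omega
  have hcardR : ((n - 1 : ℕ) : ℝ) = (n:ℝ) - 1 := by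
    have := Nat.cast_sub (show 1 ≤ n by omega) (R := ℝ)
    simpa using this
  have hsum' : ∑ i ∈ Finset.range (n + 1), p' i = 1 := by
    rw [hsplit, Finset.sum_insert h0notin, Finset.sum_insert hnnotin] at hsum ⊢
    have e1 : p' 0 = 0 := by simp [hp']
    have e2 : ∑ i ∈ Finset.Icc 1 (n - 1), p' i
        = (∑ i ∈ Finset.Icc 1 (n - 1), p i) + ((n:ℝ) - 1) * c := by
      rw [Finset.sum_congr rfl hp'i, Finset.sum_add_distrib, Finset.sum_const, hcard,
        nsmul_eq_mul, hcardR]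
    have e3 : ((n:ℝ) - 1) * c = p 0 := by
      rw [hc]; field_simp
    rw [e1, hp'n, e2, e3]
    linarith
  -- bounds
  have hple : ∀ i ≤ n, p i ≤ 1 := by
    intro i hi
    calc p i ≤ ∑ j ∈ Finset.range (n + 1), p j := by
          apply Finset.single_le_sum (fun j hj => hpos j (by simp at hj; omega))
          simp; omega
      _ = 1 := hsum
  have hp0pi : ∀ i ∈ Finset.Icc 1 (n - 1), p 0 + p i ≤ 1 := by
    intro i hi
    rw [Finset.mem_Icc] at hi
    have hsub : ({0, i} : Finset ℕ) ⊆ Finset.range (n + 1) := by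
      intro j hj
      simp only [Finset.mem_insert, Finset.mem_singleton] at hj
      simp only [Finset.mem_range]
      omega
    have := Finset.sum_le_sum_of_subset_of_nonneg hsub
      (fun j hj _ => hpos j (by simp at hj; omega))
    rw [Finset.sum_pair (show (0:ℕ) ≠ i by omega)] at this
    linarith [hsum ▸ this]
  have hcle : c ≤ p 0 := by
    rw [hc]
    exact div_le_self hp0.le hn1
  refine ⟨x - η, p', by linarith, by linarith, hp'n, hsum', ?_, ?_, ?_, ?_⟩
  · intro i hi
    rw [hp']
    simp only
    split_ifs with h1 h2
    · exact le_rfl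
    · exact add_nonneg (hpos i hi) hcpos.le
    · exact hpos i hi
  · intro i hi
    have hmem := hi
    rw [Finset.mem_Icc] at hmem
    have hci := hcons i hi
    have hΔi := hΔ i hi
    have hpic : p i + c ≤ 1 := by
      have := hp0pi i hi
      linarith
    have hpn : 0 ≤ p n := hpos n le_rfl
    rw [hp'i i hi, hp'n]
    nlinarith [mul_nonneg hcpos.le hΔi, mul_nonneg hpn hηpos.le,
      mul_nonneg hηpos.le (sub_nonneg.mpr hpic), mul_nonneg (hpos i (by omega)) hηpos.le]
  · rw [hp'n]
    nlinarith [mul_nonneg (hpos n le_rfl) hηpos.le]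
  · rw [hp'n]
    nlinarith [mul_pos ha hηpos]
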